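/- arXiv:1310.1566 — 2 statements merged into one kernel-verified Lean document; each statement's English description precedes it below -/
import Mathlib

section
/- Let U be the shift unitary on ℓ²({#} ∪ ℤ) (fixing e_# and sending e_k to e_{k+1}), and let T be a positive trace-class operator with trace 1 satisfying T = U T U*. Then T = P_#, the rank-one projection onto e_#. Hence the unique shift-invariant normal state on the compact operators K(ℓ²({#} ∪ ℤ)) is the vacuum state A ↦ ⟨A e_#, e_#⟩. -/
/-! The diagonal entries `⟪e_k, T e_k⟫` are invariant under `k ↦ k + 1` and summable over `ℤ`,
hence zero. Positivity then gives `T e_k = 0` (as `⟪x, T x⟫ = ‖√T x‖²`), so `T` is supported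
on `e_#`, where the trace condition makes it `P_#`. -/

open scoped ComplexInnerProductSpace

noncomputable section

/-- The Boolean Fock space over `ℓ²(ℤ)`, identified with `ℓ²({#} ∪ ℤ)`. -/
abbrev BoolSp : Type := lp (fun _ : Option ℤ => ℂ) 2

/-- The canonical orthonormal basis vectors `e_#` (`x = none`) and `e_i` (`x = some i`). -/
def basisVec (x : Option ℤ) : BoolSp := lp.single 2 x 1

/-- The rank-one projection `P_#` onto `e_#`. -/
def vacProj : BoolSp →L[ℂ] BoolSp :=
  (innerSL ℂ (basisVec none)).smulRight (basisVec none)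

namespace ContinuousLinearMap

variable {H : Type*} [NormedAddCommGroup H] [InnerProductSpace ℂ H] [CompleteSpace H]

theorem IsPositive.apply_eq_zero_of_inner_eq_zero {T : H →L[ℂ] H} (hT : T.IsPositive) {x : H}
    (hx : ⟪x, T x⟫ = 0) : T x = 0 := by
  have hT0 : 0 ≤ T := (nonneg_iff_isPositive T).mpr hT
  set S := CFC.sqrt T
  have hS : IsSelfAdjoint S := (CFC.sqrt_nonneg T).isSelfAdjoint
  have hTS : T = S * S := (CFC.sqrt_mul_sqrt_self T hT0).symm
  have hSx : S x = 0 := by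
    rw [← inner_self_eq_zero (𝕜 := ℂ)]
    calc ⟪S x, S x⟫ = ⟪x, (S * S) x⟫ := hS.isSymmetric x (S x)
      _ = 0 := by rw [← hTS, hx]
  rw [hTS, mul_apply_eq_comp, hSx, map_zero]

theorem inner_map_apply_map_eq_of_eq_conj {U T : H →L[ℂ] H} (hU : adjoint U ∘L U = 1)
    (hT : T = U ∘L T ∘L adjoint U) (x : H) : ⟪U x, T (U x)⟫ = ⟪x, T x⟫ := by
  have hUU : adjoint U (U x) = x := by rw [← comp_apply, hU, one_apply_eq_self]
  calc ⟪U x, T (U x)⟫ = ⟪U x, U (T (adjoint U (U x)))⟫ :=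
        congrArg (fun S : H →L[ℂ] H => ⟪U x, S (U x)⟫) hT
    _ = ⟪x, T x⟫ := by rw [hUU, ← adjoint_inner_left, hUU]

end ContinuousLinearMap

theorem eq_zero_of_summable_const {α β : Type*} [Infinite β] [AddCommGroup α] [TopologicalSpace α]
    [IsTopologicalAddGroup α] [T2Space α] {a : α} (h : Summable fun _ : β => a) : a = 0 :=
  tendsto_nhds_unique tendsto_const_nhds h.tendsto_cofinite_zero

lemma inner_basisVec_left (i : Option ℤ) (x : BoolSp) : ⟪basisVec i, x⟫ = x i := by
  simp [basisVec, lp.inner_single_left]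

lemma eq_inner_smul_basisVec_none {x : BoolSp} (hx : ∀ k : ℤ, x (some k) = 0) :
    x = ⟪basisVec none, x⟫ • basisVec none := by
  ext (_ | k)
  · rw [inner_basisVec_left]
    simp [basisVec]
  · simp [hx, basisVec]

lemma eq_vacProj_of_symmetric {T : BoolSp →L[ℂ] BoolSp}
    (hT : ∀ x y, ⟪T x, y⟫ = ⟪x, T y⟫)
    (hsome : ∀ k : ℤ, T (basisVec (some k)) = 0)
    (hnone : ⟪basisVec none, T (basisVec none)⟫ = 1) : T = vacProj := by
  have hrange : ∀ x, T x = ⟪T (basisVec none), x⟫ • basisVec none := fun x => by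
    refine (eq_inner_smul_basisVec_none fun k => ?_).trans (by rw [hT])
    rw [← inner_basisVec_left, ← hT, hsome, inner_zero_left]
  have hvac : T (basisVec none) = basisVec none := by
    rw [hrange, hT, hnone, one_smul]
  ext x
  rw [hrange, hvac]
  rfl

lemma hasSum_inner_vacProj_comp (A : BoolSp →L[ℂ] BoolSp) :
    HasSum (fun i => ⟪basisVec i, (vacProj ∘L A) (basisVec i)⟫)
      ⟪basisVec none, A (basisVec none)⟫ := by
  convert hasSum_ite_eq none ⟪basisVec none, A (basisVec none)⟫ using 2 with i
  cases i <;> simp [vacProj, inner_basisVec_left] <;> simp [basisVec]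

theorem shift_invariant_normal_state_is_vacuum_general (U T : BoolSp →L[ℂ] BoolSp)
    (hshift : ∀ k : ℤ, U (basisVec (some k)) = basisVec (some (k + 1)))
    (hiso : ∀ x : BoolSp, ‖U x‖ = ‖x‖)
    (hpos : T.IsPositive)
    (htr : HasSum (fun i : Option ℤ => ⟪basisVec i, T (basisVec i)⟫) 1)
    (hinv : T = U ∘L T ∘L (ContinuousLinearMap.adjoint U)) :
    T = vacProj ∧
      ∀ A : BoolSp →L[ℂ] BoolSp,
        HasSum (fun i : Option ℤ => ⟪basisVec i, (T ∘L A) (basisVec i)⟫)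
          ⟪basisVec none, A (basisVec none)⟫ := by
  set d : ℤ → ℂ := fun k => ⟪basisVec (some k), T (basisVec (some k))⟫
  have hU := U.norm_map_iff_adjoint_comp_self.mp hiso
  have hperiodic : Function.Periodic d 1 := fun k => by
    simpa only [hshift] using U.inner_map_apply_map_eq_of_eq_conj hU hinv (basisVec (some k))
  have hsummable : Summable d := htr.summable.comp_injective (Option.some_injective ℤ)
  have hconst : ∀ k, d k = d 0 := fun k => by simpa using hperiodic.int_mul_eq k
  have hd : ∀ k, d k = 0 := fun k =>
    (hconst k).trans (eq_zero_of_summable_const (hsummable.congr hconst))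
  have hsome : ∀ k : ℤ, T (basisVec (some k)) = 0 := fun k =>
    hpos.apply_eq_zero_of_inner_eq_zero (hd k)
  have hnone : ⟪basisVec none, T (basisVec none)⟫ = 1 :=
    (hasSum_single none fun i hi => by
      obtain ⟨k, rfl⟩ := Option.ne_none_iff_exists'.mp hi
      exact hd k).unique htr
  obtain rfl := eq_vacProj_of_symmetric hpos.inner_left_eq_inner_right hsome hnone
  exact ⟨rfl, hasSum_inner_vacProj_comp⟩

/-- If `U` is the shift unitary on `ℓ²({#} ∪ ℤ)` (fixing `e_#`, sending `e_k` to
`e_{k+1}`) and `T` is a positive trace-class operator of trace `1` with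
`T = U T U*`, then `T = P_#`; hence the corresponding shift-invariant normal state
on the compact operators is the vacuum state `A ↦ ⟨A e_#, e_#⟩`. -/
theorem shift_invariant_normal_state_is_vacuum (U T : BoolSp →L[ℂ] BoolSp)
    (hvac : U (basisVec none) = basisVec none)
    (hshift : ∀ k : ℤ, U (basisVec (some k)) = basisVec (some (k + 1)))
    (hiso : ∀ x : BoolSp, ‖U x‖ = ‖x‖) (hsurj : Function.Surjective U)
    (hpos : T.IsPositive)
    (htr : HasSum (fun i : Option ℤ => ⟪basisVec i, T (basisVec i)⟫) 1)
    (hinv : T = U ∘L T ∘L (ContinuousLinearMap.adjoint U)) :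
    T = vacProj ∧
      ∀ A : BoolSp →L[ℂ] BoolSp,
        HasSum (fun i : Option ℤ => ⟪basisVec i, (T ∘L A) (basisVec i)⟫)
          ⟪basisVec none, A (basisVec none)⟫ :=
  shift_invariant_normal_state_is_vacuum_general U T hshift hiso hpos htr hinv

end
end

section
/- On the q-deformed Fock space with -1 < q < 1, the creation and annihilation operators satisfy the q-commutation relation a_q(f) a_q†(g) - q a_q†(g) a_q(f) = ⟨g, f⟩ · 1 on the dense span of elementary tensors, for all f, g ∈ H. -/
open scoped ComplexInnerProductSpace

noncomputable section

variable {H : Type*} [NormedAddCommGroup H] [InnerProductSpace ℂ H]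

/-- The dense span of elementary tensors of the `q`-Fock space, modelled as the free
vector space on words (lists) of vectors of `H`; the empty list is the vacuum `Ω`. -/
abbrev FockSpan (H : Type*) := (List H) →₀ ℂ

/-- The creation operator `a_q†(g)`: on an elementary tensor it prepends `g`. -/
def qCre (g : H) : FockSpan H →ₗ[ℂ] FockSpan H :=
  Finsupp.lmapDomain ℂ ℂ (fun l => g :: l)

/-- The `q`-annihilation operator:
`a_q(f)(f₁⊗…⊗fₙ) = Σ_{k=1}^n q^{k-1} ⟨f_k, f⟩ f₁⊗…⊗f_{k-1}⊗f_{k+1}⊗…⊗fₙ`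
(with `⟨f_k, f⟩ = ⟪f, f_k⟫` in Mathlib's convention), and `a_q(f) Ω = 0`. -/
def qAnn (q : ℝ) (f : H) : FockSpan H →ₗ[ℂ] FockSpan H :=
  Finsupp.lift (FockSpan H) ℂ (List H)
    (fun l => ∑ k ∈ Finset.range l.length,
      ((q : ℂ) ^ k * ⟪f, l.getD k 0⟫) • Finsupp.single (l.eraseIdx k) (1 : ℂ))

theorem qCre_single {E : Type*} (g : E) (l : List E) (c : ℂ) :
    qCre g (Finsupp.single l c) = Finsupp.single (g :: l) c :=
  Finsupp.mapDomain_single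

theorem qAnn_single_one (q : ℝ) (f : H) (l : List H) :
    qAnn q f (Finsupp.single l 1) = ∑ k ∈ Finset.range l.length,
      ((q : ℂ) ^ k * ⟪f, l.getD k 0⟫) • Finsupp.single (l.eraseIdx k) (1 : ℂ) := by
  simp only [qAnn, Finsupp.lift_apply, Finsupp.sum_single_index, one_smul, zero_smul]

/-- Removing the first letter `g` gives `⟪f, g⟫`; removing any later letter is removal from
the tail, shifted by one position and hence weighted by one more factor `q`. -/
theorem qAnn_single_cons (q : ℝ) (f g : H) (l : List H) :
    qAnn q f (Finsupp.single (g :: l) 1) =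
      ⟪f, g⟫ • Finsupp.single l 1 + (q : ℂ) • qCre g (qAnn q f (Finsupp.single l 1)) := by
  rw [qAnn_single_one, qAnn_single_one, List.length_cons, Finset.sum_range_succ', map_sum,
    Finset.smul_sum, add_comm]
  congr 1
  · simp
  · refine Finset.sum_congr rfl fun k _ => ?_
    rw [map_smul, qCre_single, smul_smul, List.getD_cons_succ, List.eraseIdx_cons_succ,
      pow_succ]
    ring_nf

theorem qAnn_comp_qCre (q : ℝ) (f g : H) :
    qAnn q f ∘ₗ qCre g = ⟪f, g⟫ • LinearMap.id + (q : ℂ) • qCre g ∘ₗ qAnn q f :=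
  Finsupp.lhom_ext' fun l => LinearMap.ext_ring <| by
    simpa [qCre_single] using qAnn_single_cons q f g l

theorem q_commutation_relation_general (q : ℝ) (f g : H)
    (v : FockSpan H) :
    qAnn q f (qCre g v) - (q : ℂ) • qCre g (qAnn q f v) = ⟪f, g⟫ • v := by
  rw [sub_eq_iff_eq_add]
  simpa using LinearMap.congr_fun (qAnn_comp_qCre q f g) v

/-- The `q`-commutation relation
`a_q(f) a_q†(g) - q a_q†(g) a_q(f) = ⟨g, f⟩ · 1` holds on the dense span of
elementary tensors, for `-1 < q < 1`. -/
theorem q_commutation_relation (q : ℝ) (hq₁ : -1 < q) (hq₂ : q < 1) (f g : H)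
    (v : FockSpan H) :
    qAnn q f (qCre g v) - (q : ℂ) • qCre g (qAnn q f v) = ⟪f, g⟫ • v :=
  q_commutation_relation_general q f g v

end
end
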